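/- arXiv:1410.6956 — 2 statements merged into one kernel-verified Lean document; each statement's English description precedes it below -/
import Mathlib

section
/- Let W̄ := E[W] where W is a random N×N matrix with nonnegative entries satisfying W𝟏 = 𝟏 almost surely, and assume the spectral radius of E[WᵀJ⊥W] is strictly smaller than 1. Then the vector v ∈ ℝ^N defined by vᵀ := (1/N)𝟏ᵀ W̄ (I_N − J⊥ W̄)^{−1} is the unique vector with nonnegative entries satisfying vᵀ = vᵀ W̄ and vᵀ𝟏 = 1. -/
open MeasureTheory ProbabilityTheory Filter Matrix Set
open scoped Kronecker Topology ENNReal NNReal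

noncomputable section

namespace DistSA

instance matMS {m n : Type*} : MeasurableSpace (Matrix m n ℝ) := by
  unfold Matrix; infer_instance

/-- The vector space `ℝ^{dN}`, coordinates indexed by pairs `(i, j)` where `i` is the agent. -/
abbrev EVec (N d : ℕ) := Fin N × Fin d → ℝ

/-- Euclidean norm on a finite product of copies of `ℝ`. -/
def enorm {ι : Type*} [Fintype ι] (x : ι → ℝ) : ℝ := Real.sqrt (∑ i, (x i) ^ 2)

/-- Spectral (operator) norm with respect to the Euclidean norm. -/
def specNorm {ι : Type*} [Fintype ι] (A : Matrix ι ι ℝ) : ℝ :=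
  sInf {c | 0 ≤ c ∧ ∀ x : ι → ℝ, enorm (A.mulVec x) ≤ c * enorm x}

/-- Spectral radius of a real matrix: largest modulus of a complex eigenvalue. -/
def specRad {ι : Type*} [Fintype ι] [DecidableEq ι] (A : Matrix ι ι ℝ) : ℝ :=
  sSup ((fun z : ℂ => ‖z‖) '' spectrum ℂ (A.map (algebraMap ℝ ℂ)))

variable (N d : ℕ)

/-- `J = (1/N) 𝟏𝟏ᵀ`, the orthogonal projector onto the span of the all-one vector. -/
def Jmat : Matrix (Fin N) (Fin N) ℝ := Matrix.of fun _ _ => (N : ℝ)⁻¹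

/-- `J⊥ = I_N - J`. -/
def Jperp : Matrix (Fin N) (Fin N) ℝ := 1 - Jmat N

/-- `w ⊗ I_d`, acting on `ℝ^{dN}`. -/
def Kro (w : Matrix (Fin N) (Fin N) ℝ) : Matrix (Fin N × Fin d) (Fin N × Fin d) ℝ :=
  w ⊗ₖ (1 : Matrix (Fin d) (Fin d) ℝ)

/-- `𝒥⊥ = J⊥ ⊗ I_d`. -/
def Jperpb : Matrix (Fin N × Fin d) (Fin N × Fin d) ℝ := Kro N d (Jperp N)

/-- `𝒥 = J ⊗ I_d`. -/
def Jb : Matrix (Fin N × Fin d) (Fin N × Fin d) ℝ := Kro N d (Jmat N)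

/-- `⟨x⟩ = (1/N)(𝟏ᵀ ⊗ I_d) x = (x₁ + ⋯ + x_N)/N`. -/
def avg (x : EVec N d) : Fin d → ℝ := fun j => (N : ℝ)⁻¹ * ∑ i, x (i, j)

/-- `𝟏 ⊗ ϑ`, the consensus vector with common value `ϑ`. -/
def emb (ϑ : Fin d → ℝ) : EVec N d := fun p => ϑ p.2

/-- Row-stochastic matrices: nonnegative entries, rows summing to 1. -/
def RowStochastic (w : Matrix (Fin N) (Fin N) ℝ) : Prop :=
  (∀ i j, 0 ≤ w i j) ∧ ∀ i, ∑ j, w i j = 1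

/-!
Put `B := J⊥ W̄` and `c := (1/N) 𝟏ᵀ W̄`. For a vector `u` with `u𝟏 = 1` we have `uJ⊥ = u - (1/N)𝟏ᵀ`,
hence `u(I - B) = u - uW̄ + c`: such a `u` is stationary iff `u(I - B) = c`. So as soon as
`I - B` is invertible, `v = c (I - B)⁻¹` is the only candidate, and it is indeed a stationary
probability vector because `B𝟏 = 0`.

Invertibility comes from `‖B‖₂ < 1`. By Jensen's inequality,
`‖J⊥ W̄ x‖² ≤ E ‖J⊥ W x‖² = xᵀ E[Wᵀ J⊥ W] x`, and the symmetric matrix `E[Wᵀ J⊥ W]` has operator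
norm at most its spectral radius, which is `< 1`.

Nonnegativity of `v`: for sum-zero row vectors `d` we have `dJ⊥ = d`, and `W̄` preserves sums,
so `dW̄ⁿ = dBⁿ`. Applied to `d = (1/N)𝟏ᵀ - v` this gives `(1/N)𝟏ᵀ W̄ⁿ = v + dBⁿ → v`, a limit of
nonnegative vectors.
-/

section EntrywiseIntegral

variable {Ω : Type*} [MeasurableSpace Ω] {P : Measure Ω} {m n : Type*}

/-- The expectation `E[D]` of a random matrix, taken entry by entry as in the statement. -/
def entrywiseIntegral (P : Measure Ω) (D : Ω → Matrix m n ℝ) : Matrix m n ℝ :=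
  of fun i j => ∫ ω, D ω i j ∂P

lemma memLp_dotProduct [Fintype n] {p : ℝ≥0∞} {f : Ω → n → ℝ}
    (hf : ∀ i, MemLp (fun ω => f ω i) p P) (x : n → ℝ) : MemLp (fun ω => f ω ⬝ᵥ x) p P :=
  memLp_finsetSum _ fun i _ => (hf i).mul_const (x i)

lemma memLp_mul_apply [Fintype m] {l : Type*} {p : ℝ≥0∞} (C : Matrix l m ℝ)
    {D : Ω → Matrix m n ℝ} (hD : ∀ i j, MemLp (fun ω => D ω i j) p P) (i : l) (j : n) :
    MemLp (fun ω => (C * D ω) i j) p P :=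
  memLp_finsetSum _ fun k _ => (hD k j).const_mul (C i k)

lemma dotProduct_integral [Fintype n] {f : Ω → n → ℝ} (hf : ∀ i, Integrable (fun ω => f ω i) P)
    (x : n → ℝ) : x ⬝ᵥ (fun i => ∫ ω, f ω i ∂P) = ∫ ω, x ⬝ᵥ f ω ∂P := by
  simp only [dotProduct, ← integral_const_mul]
  exact (integral_finsetSum _ fun i _ => (hf i).const_mul (x i)).symm

lemma entrywiseIntegral_mulVec [Fintype n] {D : Ω → Matrix m n ℝ}
    (hD : ∀ i j, Integrable (fun ω => D ω i j) P) (x : n → ℝ) :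
    entrywiseIntegral P D *ᵥ x = fun i => ∫ ω, (D ω *ᵥ x) i ∂P := by
  ext i
  simp only [mulVec, entrywiseIntegral, of_apply, dotProduct_comm _ x]
  exact dotProduct_integral (hD i) x

lemma mul_entrywiseIntegral [Fintype m] {l : Type*} (C : Matrix l m ℝ) {D : Ω → Matrix m n ℝ}
    (hD : ∀ i j, Integrable (fun ω => D ω i j) P) :
    C * entrywiseIntegral P D = entrywiseIntegral P fun ω => C * D ω := by
  ext i j
  exact dotProduct_integral (fun k => hD k j) (C i)

lemma dotProduct_entrywiseIntegral_mulVec [Fintype n] {D : Ω → Matrix n n ℝ}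
    (hD : ∀ i j, Integrable (fun ω => D ω i j) P) (x : n → ℝ) :
    x ⬝ᵥ (entrywiseIntegral P D *ᵥ x) = ∫ ω, x ⬝ᵥ (D ω *ᵥ x) ∂P := by
  rw [entrywiseIntegral_mulVec hD, dotProduct_integral]
  exact fun i => memLp_one_iff_integrable.1 <|
    memLp_dotProduct (fun j => memLp_one_iff_integrable.2 (hD i j)) x

lemma isSymm_entrywiseIntegral_transpose_mul_self [Fintype m] (D : Ω → Matrix m n ℝ) :
    (entrywiseIntegral P fun ω => (D ω)ᵀ * D ω).IsSymm := by
  ext i j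
  simp only [entrywiseIntegral, transpose_apply, of_apply, mul_apply, mul_comm]

lemma sq_integral_le_integral_sq [IsProbabilityMeasure P] {f : Ω → ℝ} (hf : MemLp f 2 P) :
    (∫ ω, f ω ∂P) ^ 2 ≤ ∫ ω, f ω ^ 2 ∂P := by
  have := variance_nonneg f P
  rw [variance_eq_sub hf] at this
  simpa using this

lemma integral_dotProduct_self_le [Fintype n] [IsProbabilityMeasure P] {f : Ω → n → ℝ}
    (hf : ∀ i, MemLp (fun ω => f ω i) 2 P) :
    (fun i => ∫ ω, f ω i ∂P) ⬝ᵥ (fun i => ∫ ω, f ω i ∂P) ≤ ∫ ω, f ω ⬝ᵥ f ω ∂P := by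
  simp only [dotProduct, ← sq]
  rw [integral_finsetSum _ fun i _ => (hf i).integrable_sq]
  exact Finset.sum_le_sum fun i _ => sq_integral_le_integral_sq (hf i)

theorem entrywiseIntegral_mulVec_dotProduct_self_le [Fintype m] [Fintype n]
    [IsProbabilityMeasure P] {D : Ω → Matrix m n ℝ} (hD : ∀ i j, MemLp (fun ω => D ω i j) 2 P)
    (x : n → ℝ) :
    (entrywiseIntegral P D *ᵥ x) ⬝ᵥ (entrywiseIntegral P D *ᵥ x) ≤
      x ⬝ᵥ (entrywiseIntegral P (fun ω => (D ω)ᵀ * D ω) *ᵥ x) := by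
  have hDtD i j : Integrable (fun ω => ((D ω)ᵀ * D ω) i j) P :=
    integrable_finsetSum _ fun k _ => (hD k i).integrable_mul (hD k j)
  calc (entrywiseIntegral P D *ᵥ x) ⬝ᵥ (entrywiseIntegral P D *ᵥ x)
      ≤ ∫ ω, (D ω *ᵥ x) ⬝ᵥ (D ω *ᵥ x) ∂P := by
        rw [entrywiseIntegral_mulVec fun i j => (hD i j).integrable one_le_two]
        exact integral_dotProduct_self_le fun i => memLp_dotProduct (hD i) x
    _ = ∫ ω, x ⬝ᵥ (((D ω)ᵀ * D ω) *ᵥ x) ∂P := by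
        simp only [← mulVec_mulVec, dotProduct_mulVec x, vecMul_transpose]
    _ = x ⬝ᵥ (entrywiseIntegral P (fun ω => (D ω)ᵀ * D ω) *ᵥ x) :=
        (dotProduct_entrywiseIntegral_mulVec hDtD x).symm

end EntrywiseIntegral

section OperatorNorm

open scoped Matrix.Norms.L2Operator

variable {n : Type*} [Fintype n]

lemma norm_toLp_sq (x : n → ℝ) : ‖WithLp.toLp 2 x‖ ^ 2 = x ⬝ᵥ x := by
  rw [← real_inner_self_eq_norm_sq, EuclideanSpace.inner_toLp_toLp, star_trivial]

variable [DecidableEq n]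

lemma l2_opNorm_le_sqrt_of_dotProduct_le {B : Matrix n n ℝ} {r : ℝ} (hr : 0 ≤ r)
    (h : ∀ x, (B *ᵥ x) ⬝ᵥ (B *ᵥ x) ≤ r * (x ⬝ᵥ x)) : ‖B‖ ≤ √r := by
  rw [l2_opNorm_def]
  refine ContinuousLinearMap.opNorm_le_bound _ (Real.sqrt_nonneg r) fun x => ?_
  change ‖WithLp.toLp 2 (B *ᵥ x.ofLp)‖ ≤ √r * ‖WithLp.toLp 2 x.ofLp‖
  rw [← pow_le_pow_iff_left₀ (norm_nonneg _) (by positivity) two_ne_zero, mul_pow,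
    Real.sq_sqrt hr, norm_toLp_sq, norm_toLp_sq]
  exact h x.ofLp

lemma dotProduct_mulVec_le_l2_opNorm (M : Matrix n n ℝ) (x : n → ℝ) :
    x ⬝ᵥ (M *ᵥ x) ≤ ‖M‖ * (x ⬝ᵥ x) := by
  calc x ⬝ᵥ (M *ᵥ x) = inner ℝ (WithLp.toLp 2 (M *ᵥ x)) (WithLp.toLp 2 x) := by
        rw [EuclideanSpace.inner_toLp_toLp, star_trivial]
    _ ≤ ‖WithLp.toLp 2 (M *ᵥ x)‖ * ‖WithLp.toLp 2 x‖ := real_inner_le_norm _ _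
    _ ≤ ‖M‖ * ‖WithLp.toLp 2 x‖ * ‖WithLp.toLp 2 x‖ := by
        gcongr
        exact M.l2_opNorm_mulVec (WithLp.toLp 2 x)
    _ = ‖M‖ * (x ⬝ᵥ x) := by rw [mul_assoc, ← sq, norm_toLp_sq]

lemma l2_opNorm_le_l2_opNorm_map_ofReal (M : Matrix n n ℝ) :
    ‖M‖ ≤ ‖M.map (algebraMap ℝ ℂ)‖ := by
  have hnorm (y : n → ℝ) : ‖WithLp.toLp 2 (algebraMap ℝ ℂ ∘ y)‖ = ‖WithLp.toLp 2 y‖ := by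
    simp [EuclideanSpace.norm_eq]
  rw [l2_opNorm_def]
  refine ContinuousLinearMap.opNorm_le_bound _ (norm_nonneg _) fun x => ?_
  change ‖WithLp.toLp 2 (M *ᵥ x.ofLp)‖ ≤ _ * ‖WithLp.toLp 2 x.ofLp‖
  have hmap : M.map (algebraMap ℝ ℂ) *ᵥ (algebraMap ℝ ℂ ∘ x.ofLp) =
      algebraMap ℝ ℂ ∘ (M *ᵥ x.ofLp) :=
    funext fun i => (RingHom.map_mulVec _ M _ i).symm
  have := (M.map (algebraMap ℝ ℂ)).l2_opNorm_mulVec (WithLp.toLp 2 (algebraMap ℝ ℂ ∘ x.ofLp))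
  rw [hmap, hnorm] at this
  rwa [← hnorm]

lemma specRad_nonneg (M : Matrix n n ℝ) : 0 ≤ specRad M :=
  Real.sSup_nonneg fun _ ⟨z, _, hz⟩ => hz ▸ norm_nonneg z

/-- `specRad` is read off the complex spectrum: pass to the C⋆-algebra of complex matrices, where
the norm of a self-adjoint element is its spectral radius. -/
lemma l2_opNorm_le_specRad {M : Matrix n n ℝ} (hM : M.IsSymm) : ‖M‖ ≤ specRad M := by
  refine (l2_opNorm_le_l2_opNorm_map_ofReal M).trans ?_
  have hsa : IsSelfAdjoint (M.map (algebraMap ℝ ℂ)) :=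
    (isHermitian_iff_isSymm.2 hM).map _ fun _ => by simp
  rw [← hsa.toReal_spectralRadius_complex_eq_norm]
  refine ENNReal.toReal_le_of_le_ofReal (specRad_nonneg M) (iSup₂_le fun z hz => ?_)
  rw [← ENNReal.ofReal_coe_nnreal, coe_nnnorm]
  exact ENNReal.ofReal_le_ofReal <| le_csSup
    ((spectrum.isCompact _).image continuous_norm).bddAbove ⟨z, hz, rfl⟩

lemma l2_opNorm_lt_one_of_dotProduct_le {B M : Matrix n n ℝ} (hM : M.IsSymm)
    (hsr : specRad M < 1) (h : ∀ x, (B *ᵥ x) ⬝ᵥ (B *ᵥ x) ≤ x ⬝ᵥ (M *ᵥ x)) : ‖B‖ < 1 := by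
  refine (l2_opNorm_le_sqrt_of_dotProduct_le (specRad_nonneg M) fun x => ?_).trans_lt
    ((Real.sqrt_lt' one_pos).2 (by rwa [one_pow]))
  calc (B *ᵥ x) ⬝ᵥ (B *ᵥ x) ≤ ‖M‖ * (x ⬝ᵥ x) := (h x).trans (dotProduct_mulVec_le_l2_opNorm M x)
    _ ≤ specRad M * (x ⬝ᵥ x) := by
        gcongr
        · exact norm_toLp_sq x ▸ sq_nonneg _
        · exact l2_opNorm_le_specRad hM

end OperatorNorm

section Jperp

variable {N}

lemma Jperp_transpose : (Jperp N)ᵀ = Jperp N := by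
  ext i j
  simp [Jperp, Jmat, one_apply, eq_comm]

lemma Jmat_mul_self : Jmat N * Jmat N = Jmat N := by
  ext i j
  rcases N.eq_zero_or_pos with rfl | hN
  · exact i.elim0
  · simp only [Jmat, mul_apply, of_apply, Finset.sum_const, Finset.card_univ, Fintype.card_fin,
      nsmul_eq_mul]
    field_simp

lemma Jperp_mul_self : Jperp N * Jperp N = Jperp N := by
  simp only [Jperp, mul_sub, sub_mul, one_mul, mul_one, Jmat_mul_self, sub_self, sub_zero]

lemma transpose_mul_Jperp_mul (A : Matrix (Fin N) (Fin N) ℝ) :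
    Aᵀ * Jperp N * A = (Jperp N * A)ᵀ * (Jperp N * A) := by
  rw [transpose_mul, Jperp_transpose, Matrix.mul_assoc, Matrix.mul_assoc,
    ← Matrix.mul_assoc (Jperp N), Jperp_mul_self]

lemma vecMul_Jmat (u : Fin N → ℝ) : u ᵥ* Jmat N = fun _ => (∑ i, u i) * (N : ℝ)⁻¹ := by
  ext j
  simp [vecMul, dotProduct, Jmat, Finset.sum_mul]

lemma Jmat_mulVec_one (hN : 0 < N) : Jmat N *ᵥ 1 = 1 := by
  ext i
  simp only [mulVec, dotProduct, Jmat, of_apply, Pi.one_apply, mul_one, Finset.sum_const,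
    Finset.card_univ, Fintype.card_fin, nsmul_eq_mul]
  field_simp

lemma vecMul_Jperp_of_sum_eq_zero {d : Fin N → ℝ} (hd : ∑ i, d i = 0) : d ᵥ* Jperp N = d := by
  rw [Jperp, vecMul_sub, vecMul_one, vecMul_Jmat, hd, zero_mul]
  exact sub_zero d

lemma vecMul_Jperp_of_sum_eq_one {u : Fin N → ℝ} (hu : ∑ i, u i = 1) :
    u ᵥ* Jperp N = u - fun _ => (N : ℝ)⁻¹ := by
  rw [Jperp, vecMul_sub, vecMul_one, vecMul_Jmat, hu, one_mul]

end Jperp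

section Stationary

variable {N} {A : Matrix (Fin N) (Fin N) ℝ}

def perronVector (N : ℕ) (A : Matrix (Fin N) (Fin N) ℝ) : Fin N → ℝ :=
  (fun _ => (N : ℝ)⁻¹) ᵥ* (A * (1 - Jperp N * A)⁻¹)

lemma sum_vecMul_of_mulVec_one (hA : A *ᵥ 1 = 1) (u : Fin N → ℝ) :
    ∑ i, (u ᵥ* A) i = ∑ i, u i := by
  rw [← dotProduct_one, ← dotProduct_mulVec, hA, dotProduct_one]

lemma vecMul_pow_eq_vecMul_Jperp_mul_pow (hA : A *ᵥ 1 = 1) {d : Fin N → ℝ}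
    (hd : ∑ i, d i = 0) (n : ℕ) : d ᵥ* A ^ n = d ᵥ* (Jperp N * A) ^ n := by
  induction n generalizing d with
  | zero => rfl
  | succ n ih =>
    rw [pow_succ', pow_succ', ← vecMul_vecMul, ← vecMul_vecMul,
      ih ((sum_vecMul_of_mulVec_one hA d).trans hd), ← vecMul_vecMul,
      vecMul_Jperp_of_sum_eq_zero hd]

lemma vecMul_one_sub_Jperp_mul {u : Fin N → ℝ} (hu : ∑ i, u i = 1) :
    u ᵥ* (1 - Jperp N * A) = u - u ᵥ* A + (fun _ => (N : ℝ)⁻¹) ᵥ* A := by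
  rw [vecMul_sub, vecMul_one, ← vecMul_vecMul, vecMul_Jperp_of_sum_eq_one hu, sub_vecMul]
  abel

lemma one_sub_Jperp_mul_mulVec_one (hN : 0 < N) (hA : A *ᵥ 1 = 1) :
    (1 - Jperp N * A) *ᵥ 1 = 1 := by
  rw [sub_mulVec, one_mulVec, ← mulVec_mulVec, hA, Jperp, sub_mulVec, one_mulVec,
    Jmat_mulVec_one hN, sub_self, sub_zero]

lemma perronVector_vecMul_one_sub (hB : IsUnit (1 - Jperp N * A)) :
    perronVector N A ᵥ* (1 - Jperp N * A) = (fun _ => (N : ℝ)⁻¹) ᵥ* A := by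
  rw [perronVector, vecMul_vecMul, Matrix.mul_assoc,
    nonsing_inv_mul _ ((isUnit_iff_isUnit_det _).1 hB), Matrix.mul_one]

lemma eq_perronVector_of_vecMul_eq_self (hB : IsUnit (1 - Jperp N * A)) {u : Fin N → ℝ}
    (hu : ∑ i, u i = 1) (huA : u ᵥ* A = u) : u = perronVector N A := by
  have h := vecMul_one_sub_Jperp_mul (A := A) hu
  rw [huA, sub_self, zero_add] at h
  rw [perronVector, ← vecMul_vecMul, ← h, vecMul_vecMul,
    mul_nonsing_inv _ ((isUnit_iff_isUnit_det _).1 hB), vecMul_one]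

lemma sum_perronVector (hN : 0 < N) (hA : A *ᵥ 1 = 1) (hB : IsUnit (1 - Jperp N * A)) :
    ∑ i, perronVector N A i = 1 := by
  rw [← dotProduct_one, ← one_sub_Jperp_mul_mulVec_one hN hA, dotProduct_mulVec,
    perronVector_vecMul_one_sub hB, dotProduct_one, sum_vecMul_of_mulVec_one hA]
  simp [hN.ne']

lemma perronVector_vecMul (hN : 0 < N) (hA : A *ᵥ 1 = 1) (hB : IsUnit (1 - Jperp N * A)) :
    perronVector N A ᵥ* A = perronVector N A := by
  have h := vecMul_one_sub_Jperp_mul (A := A) (sum_perronVector hN hA hB)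
  rw [perronVector_vecMul_one_sub hB, right_eq_add, sub_eq_zero] at h
  exact h.symm

end Stationary

section RowStochastic

variable {N}

lemma RowStochastic.mulVec_one {A : Matrix (Fin N) (Fin N) ℝ} (hA : RowStochastic N A) :
    A *ᵥ 1 = 1 := by
  ext i
  simp only [mulVec, dotProduct, Pi.one_apply, mul_one]
  exact hA.2 i

lemma RowStochastic.vecMul_pow_nonneg {A : Matrix (Fin N) (Fin N) ℝ} (hA : RowStochastic N A)
    {u : Fin N → ℝ} (hu : ∀ i, 0 ≤ u i) (n : ℕ) (j : Fin N) : 0 ≤ (u ᵥ* A ^ n) j := by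
  induction n generalizing j with
  | zero => simpa using hu j
  | succ n ih =>
    rw [pow_succ, ← vecMul_vecMul]
    simp only [vecMul, dotProduct]
    exact Finset.sum_nonneg fun i _ => mul_nonneg (ih i) (hA.1 i j)

lemma RowStochastic.apply_le_one {A : Matrix (Fin N) (Fin N) ℝ} (hA : RowStochastic N A)
    (i j : Fin N) : A i j ≤ 1 :=
  hA.2 i ▸ Finset.single_le_sum (fun k _ => hA.1 i k) (Finset.mem_univ j)

lemma rowStochastic_entrywiseIntegral {Ω : Type*} [MeasurableSpace Ω] {P : Measure Ω}
    [IsProbabilityMeasure P] {W : Ω → Matrix (Fin N) (Fin N) ℝ}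
    (hW : ∀ᵐ ω ∂P, RowStochastic N (W ω)) (hint : ∀ i j, Integrable (fun ω => W ω i j) P) :
    RowStochastic N (entrywiseIntegral P W) := by
  refine ⟨fun i j => integral_nonneg_of_ae (hW.mono fun ω h => h.1 i j), fun i => ?_⟩
  simp only [entrywiseIntegral, of_apply]
  rw [← integral_finsetSum _ fun j _ => hint i j,
    integral_congr_ae (hW.mono fun ω h => h.2 i), integral_const, probReal_univ, one_smul]

end RowStochastic

section Convergence

open scoped Matrix.Norms.L2Operator

variable {N} {A : Matrix (Fin N) (Fin N) ℝ}

lemma tendsto_vecMul_pow_perronVector (hN : 0 < N) (hA : A *ᵥ 1 = 1)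
    (hB : ‖Jperp N * A‖ < 1) {u : Fin N → ℝ} (hu : ∑ i, u i = 1) :
    Tendsto (fun n => u ᵥ* A ^ n) atTop (𝓝 (perronVector N A)) := by
  set v := perronVector N A
  have hB' := isUnit_one_sub_of_norm_lt_one hB
  have hvA (n : ℕ) : v ᵥ* A ^ n = v := by
    induction n with
    | zero => exact vecMul_one v
    | succ n ih => rw [pow_succ, ← vecMul_vecMul, ih, perronVector_vecMul hN hA hB']
  have hdecomp (n : ℕ) : u ᵥ* A ^ n = v + (u - v) ᵥ* (Jperp N * A) ^ n := by
    rw [← vecMul_pow_eq_vecMul_Jperp_mul_pow hA, sub_vecMul, hvA, add_sub_cancel]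
    simp only [Pi.sub_apply]
    rw [Finset.sum_sub_distrib, hu, sum_perronVector hN hA hB', sub_self]
  simp_rw [hdecomp]
  simpa using tendsto_const_nhds.add
    (((continuous_const.matrix_vecMul continuous_id).tendsto 0).comp
      (tendsto_pow_atTop_nhds_zero_of_norm_lt_one hB))

lemma perronVector_nonneg (hN : 0 < N) (hA : RowStochastic N A) (hB : ‖Jperp N * A‖ < 1)
    (i : Fin N) : 0 ≤ perronVector N A i := by
  have he : ∑ _i : Fin N, (N : ℝ)⁻¹ = 1 := by simp [hN.ne']
  exact ge_of_tendsto'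
    (tendsto_pi_nhds.1 (tendsto_vecMul_pow_perronVector hN hA.mulVec_one hB he) i)
    fun n => hA.vecMul_pow_nonneg (fun _ => by positivity) n i

end Convergence

section RandomMatrix

open scoped Matrix.Norms.L2Operator

variable {N} {Ω : Type*} [MeasurableSpace Ω] {P : Measure Ω} [IsProbabilityMeasure P]

theorem l2_opNorm_Jperp_mul_entrywiseIntegral_lt_one {W : Ω → Matrix (Fin N) (Fin N) ℝ}
    (hW : ∀ i j, MemLp (fun ω => W ω i j) 2 P)
    (hsr : specRad (entrywiseIntegral P fun ω => (W ω)ᵀ * Jperp N * W ω) < 1) :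
    ‖Jperp N * entrywiseIntegral P W‖ < 1 := by
  simp_rw [transpose_mul_Jperp_mul] at hsr
  rw [mul_entrywiseIntegral _ fun i j => (hW i j).integrable one_le_two]
  exact l2_opNorm_lt_one_of_dotProduct_le (isSymm_entrywiseIntegral_transpose_mul_self _) hsr
    (entrywiseIntegral_mulVec_dotProduct_self_le (memLp_mul_apply _ hW))

end RandomMatrix

/-- If `W` is a random row-stochastic matrix (nonnegative entries, `W𝟏 = 𝟏` a.s.)
whose mean is `W̄ = E[W]`, and the spectral radius of `E[Wᵀ J⊥ W]` is `< 1`, then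
`vᵀ := (1/N) 𝟏ᵀ W̄ (I - J⊥ W̄)⁻¹` is the unique nonnegative vector with `vᵀ = vᵀ W̄`, `vᵀ𝟏 = 1`. -/
theorem perron_vector_unique
    (hN : 0 < N)
    {Ω : Type*} [MeasurableSpace Ω] (P : Measure Ω) [IsProbabilityMeasure P]
    (W : Ω → Matrix (Fin N) (Fin N) ℝ) (hWmeas : Measurable W)
    (hWrs : ∀ᵐ ω ∂P, RowStochastic N (W ω))
    (hsr : specRad (Matrix.of fun i j => ∫ ω, ((W ω)ᵀ * Jperp N * W ω) i j ∂P) < 1)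
    (Wbar : Matrix (Fin N) (Fin N) ℝ)
    (hWbar : Wbar = Matrix.of fun i j => ∫ ω, W ω i j ∂P)
    (v : Fin N → ℝ)
    (hv : v = Matrix.vecMul (fun _ => (N : ℝ)⁻¹) (Wbar * (1 - Jperp N * Wbar)⁻¹)) :
    ((∀ i, 0 ≤ v i) ∧ Matrix.vecMul v Wbar = v ∧ v ⬝ᵥ (fun _ => (1 : ℝ)) = 1) ∧
      ∀ u : Fin N → ℝ, (∀ i, 0 ≤ u i) → Matrix.vecMul u Wbar = u →
        u ⬝ᵥ (fun _ => (1 : ℝ)) = 1 → u = v := by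
  have hW2 (i j : Fin N) : MemLp (fun ω => W ω i j) 2 P :=
    memLp_of_bounded (hWrs.mono fun ω h => ⟨h.1 i j, h.apply_le_one i j⟩)
      (hWmeas.eval.eval).aestronglyMeasurable 2
  subst hWbar hv
  have hA := rowStochastic_entrywiseIntegral hWrs fun i j => (hW2 i j).integrable one_le_two
  have hB := l2_opNorm_Jperp_mul_entrywiseIntegral_lt_one hW2 hsr
  have hB' : IsUnit (1 - Jperp N * entrywiseIntegral P W) := by
    open scoped Matrix.Norms.L2Operator in exact isUnit_one_sub_of_norm_lt_one hB
  simp only [← Pi.one_def, dotProduct_one]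
  exact ⟨⟨perronVector_nonneg hN hA hB, perronVector_vecMul hN hA.mulVec_one hB',
      sum_perronVector hN hA.mulVec_one hB'⟩,
    fun u _ huA hu => eq_perronVector_of_vecMul_eq_self hB' hu huA⟩

end DistSA
end
end

section
/- Suppose every W_n is row-stochastic, θ_n = 𝒲_n(θ_{n−1} + γ_n Y_n) with 𝒲_n = W_n ⊗ I_d, and lim_{n→∞} γ_{n+1}/γ_n = 1 with γ_n > 0. Then there exists a constant C > 0 such that, almost surely, for all n ≥ 0: |θ_{n+1} − θ_n| ≤ C γ_n (|Y_{n+1}| + |φ_n|), where φ_n := γ_{n+1}^{−1} 𝒥⊥ θ_n. -/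
open MeasureTheory ProbabilityTheory Filter Matrix Set
open scoped Kronecker Topology ENNReal NNReal

noncomputable section

namespace DistSA

variable (N d : ℕ)

/-! The increment is `θ_{n+1} - θ_n = γ_{n+1} (𝒲 Y_{n+1} + 𝒲 φ_n - φ_n)`: since `W_{n+1}` is
row stochastic it fixes consensus vectors (`W J = J`), so `𝒲 - 1` only sees the disagreement
part `𝒥⊥ θ_n = γ_{n+1} φ_n`. A row-stochastic `𝒲` has Euclidean operator norm at most `√N`,
and a convergent ratio `γ_{n+1}/γ_n` is bounded, which turns `γ_{n+1}` into `γ_n`. -/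

lemma enorm_eq_norm_toLp {ι : Type*} [Fintype ι] (x : ι → ℝ) :
    enorm x = ‖WithLp.toLp 2 x‖ := by
  simp [enorm, EuclideanSpace.norm_eq, sq_abs]

lemma enorm_nonneg {ι : Type*} [Fintype ι] (x : ι → ℝ) : 0 ≤ enorm x := Real.sqrt_nonneg _

lemma enorm_add_le {ι : Type*} [Fintype ι] (x y : ι → ℝ) :
    enorm (x + y) ≤ enorm x + enorm y := by
  simpa only [enorm_eq_norm_toLp, WithLp.toLp_add] using
    norm_add_le (WithLp.toLp 2 x) (WithLp.toLp 2 y)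

lemma enorm_sub_le {ι : Type*} [Fintype ι] (x y : ι → ℝ) :
    enorm (x - y) ≤ enorm x + enorm y := by
  simpa only [enorm_eq_norm_toLp, WithLp.toLp_sub] using
    norm_sub_le (WithLp.toLp 2 x) (WithLp.toLp 2 y)

lemma enorm_smul {ι : Type*} [Fintype ι] (c : ℝ) (x : ι → ℝ) :
    enorm (c • x) = |c| * enorm x := by
  simpa only [enorm_eq_norm_toLp, WithLp.toLp_smul, Real.norm_eq_abs] using
    norm_smul c (WithLp.toLp 2 x)

lemma exists_succ_le_mul_of_tendsto_ratio {γ : ℕ → ℝ} (hγ : ∀ n, 0 < γ n) {a : ℝ}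
    (hratio : Tendsto (fun n => γ (n + 1) / γ n) atTop (𝓝 a)) :
    ∃ M > 0, ∀ n, γ (n + 1) ≤ M * γ n := by
  obtain ⟨M, hM⟩ := hratio.bddAbove_range
  have hle : ∀ n, γ (n + 1) / γ n ≤ M := fun n => hM ⟨n, rfl⟩
  refine ⟨M, (div_pos (hγ 1) (hγ 0)).trans_le (hle 0), fun n => ?_⟩
  exact (div_le_iff₀ (hγ n)).mp (hle n)

namespace RowStochastic

variable {N : ℕ} {w : Matrix (Fin N) (Fin N) ℝ}

lemma le_one (hw : RowStochastic N w) (i j : Fin N) : w i j ≤ 1 :=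
  hw.2 i ▸ Finset.single_le_sum (fun j' _ => hw.1 i j') (Finset.mem_univ j)

lemma sq_sum_mul_le (hw : RowStochastic N w) (i : Fin N) (x : Fin N → ℝ) :
    (∑ j, w i j * x j) ^ 2 ≤ ∑ j, x j ^ 2 :=
  calc (∑ j, w i j * x j) ^ 2 ≤ ∑ j, w i j * x j ^ 2 :=
        (even_two.convexOn_pow (𝕜 := ℝ)).map_sum_le (fun j _ => hw.1 i j) (hw.2 i)
          (fun j _ => Set.mem_univ (x j))
    _ ≤ ∑ j, x j ^ 2 := Finset.sum_le_sum fun j _ =>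
      mul_le_of_le_one_left (sq_nonneg _) (hw.le_one i j)

lemma mul_Jmat (hw : RowStochastic N w) : w * Jmat N = Jmat N := by
  ext i k
  simp [Matrix.mul_apply, Jmat, ← Finset.sum_mul, hw.2 i]

end RowStochastic

section Kronecker

variable {N d : ℕ}

lemma Kro_mulVec_apply (w : Matrix (Fin N) (Fin N) ℝ) (x : EVec N d) (i : Fin N) (k : Fin d) :
    (Kro N d w).mulVec x (i, k) = ∑ j, w i j * x (j, k) := by
  simp [Kro, Matrix.mulVec, dotProduct, Fintype.sum_prod_type, Matrix.one_apply, mul_ite]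

lemma Kro_mul (w v : Matrix (Fin N) (Fin N) ℝ) : Kro N d w * Kro N d v = Kro N d (w * v) := by
  rw [Kro, Kro, Kro, ← Matrix.mul_kronecker_mul, Matrix.mul_one]

lemma RowStochastic.Kro_mul_Jperpb_sub {w : Matrix (Fin N) (Fin N) ℝ} (hw : RowStochastic N w) :
    Kro N d w * Jperpb N d - Jperpb N d = Kro N d w - 1 := by
  have hJ : Kro N d w * Jb N d = Jb N d := by rw [Jb, Kro_mul, hw.mul_Jmat]
  have hJperpb : Jperpb N d = 1 - Jb N d := by
    refine eq_sub_of_add_eq' ?_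
    rw [Jb, Jperpb, Kro, Kro, ← Matrix.add_kronecker, Jperp, add_sub_cancel,
      Matrix.one_kronecker_one]
  rw [hJperpb, Matrix.mul_sub, Matrix.mul_one, hJ]
  abel

lemma RowStochastic.enorm_Kro_mulVec_le {w : Matrix (Fin N) (Fin N) ℝ} (hw : RowStochastic N w)
    (x : EVec N d) : enorm ((Kro N d w).mulVec x) ≤ Real.sqrt N * enorm x := by
  rw [enorm, enorm, ← Real.sqrt_mul (Nat.cast_nonneg N)]
  refine Real.sqrt_le_sqrt ?_
  calc ∑ p, (Kro N d w).mulVec x p ^ 2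
      = ∑ i, ∑ k, (∑ j, w i j * x (j, k)) ^ 2 := by
        simp only [Fintype.sum_prod_type, Kro_mulVec_apply]
    _ ≤ ∑ _i : Fin N, ∑ k, ∑ j, x (j, k) ^ 2 := by
        gcongr with i _ k _
        exact hw.sq_sum_mul_le i (fun j => x (j, k))
    _ = N * ∑ p, x p ^ 2 := by
        rw [Finset.sum_const, Finset.card_univ, Fintype.card_fin, nsmul_eq_mul,
          Fintype.sum_prod_type, Finset.sum_comm]

lemma RowStochastic.Kro_mulVec_sub_self {w : Matrix (Fin N) (Fin N) ℝ}
    (hw : RowStochastic N w) (x : EVec N d) :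
    (Kro N d w).mulVec x - x
      = (Kro N d w).mulVec ((Jperpb N d).mulVec x) - (Jperpb N d).mulVec x := by
  simpa only [Matrix.sub_mulVec, Matrix.mulVec_mulVec, Matrix.one_mulVec] using
    (congrArg (·.mulVec x) hw.Kro_mul_Jperpb_sub).symm

lemma RowStochastic.Kro_mulVec_add_smul_sub {w : Matrix (Fin N) (Fin N) ℝ}
    (hw : RowStochastic N w) {x φ : EVec N d} {c : ℝ} (hx : (Jperpb N d).mulVec x = c • φ)
    (y : EVec N d) :
    (Kro N d w).mulVec (x + c • y) - x
      = c • ((Kro N d w).mulVec y + ((Kro N d w).mulVec φ - φ)) := by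
  rw [Matrix.mulVec_add, Matrix.mulVec_smul, add_sub_right_comm, hw.Kro_mulVec_sub_self, hx,
    Matrix.mulVec_smul]
  module

lemma RowStochastic.enorm_Kro_mulVec_add_sub_le {w : Matrix (Fin N) (Fin N) ℝ}
    (hw : RowStochastic N w) (y φ : EVec N d) :
    enorm ((Kro N d w).mulVec y + ((Kro N d w).mulVec φ - φ))
      ≤ (Real.sqrt N + 1) * (enorm y + enorm φ) :=
  calc _ ≤ Real.sqrt N * enorm y + (Real.sqrt N * enorm φ + enorm φ) :=
        (enorm_add_le _ _).trans <| add_le_add (hw.enorm_Kro_mulVec_le y) <|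
          (enorm_sub_le _ _).trans <| add_le_add_left (hw.enorm_Kro_mulVec_le φ) _
    _ ≤ (Real.sqrt N + 1) * (enorm y + enorm φ) := by
        nlinarith [enorm_nonneg y, Real.sqrt_nonneg N]

end Kronecker

theorem increment_bound
    {Ω : Type*} [MeasurableSpace Ω] (P : Measure Ω)
    (γ : ℕ → ℝ) (hγpos : ∀ n, 0 < γ n)
    (hγratio : Tendsto (fun n => γ (n + 1) / γ n) atTop (𝓝 1))
    (W : ℕ → Ω → Matrix (Fin N) (Fin N) ℝ)
    (Y : ℕ → Ω → EVec N d)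
    (θ : ℕ → Ω → EVec N d)
    (hrs : ∀ n ω, RowStochastic N (W n ω))
    (hrec : ∀ n ω, θ (n + 1) ω = (Kro N d (W (n + 1) ω)).mulVec (θ n ω + γ (n + 1) • Y (n + 1) ω))
    (φ : ℕ → Ω → EVec N d)
    (hφ : ∀ n ω, φ n ω = (γ (n + 1))⁻¹ • (Jperpb N d).mulVec (θ n ω)) :
    ∃ C > 0, ∀ᵐ ω ∂P, ∀ n : ℕ,
      enorm (θ (n + 1) ω - θ n ω) ≤ C * γ n * (enorm (Y (n + 1) ω) + enorm (φ n ω)) := by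
  obtain ⟨M, hM, hMγ⟩ := exists_succ_le_mul_of_tendsto_ratio hγpos hγratio
  refine ⟨M * (Real.sqrt N + 1), by positivity, ae_of_all P fun ω n => ?_⟩
  have hw := hrs (n + 1) ω
  have hdev : (Jperpb N d).mulVec (θ n ω) = γ (n + 1) • φ n ω := by
    rw [hφ, smul_inv_smul₀ (hγpos (n + 1)).ne']
  rw [hrec, hw.Kro_mulVec_add_smul_sub hdev, enorm_smul, abs_of_pos (hγpos (n + 1))]
  calc _ ≤ M * γ n * ((Real.sqrt N + 1) * (enorm (Y (n + 1) ω) + enorm (φ n ω))) :=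
        mul_le_mul (hMγ n) (hw.enorm_Kro_mulVec_add_sub_le _ _) (enorm_nonneg _)
          (mul_pos hM (hγpos n)).le
    _ = _ := by ring

end DistSA
end
end
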